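/- arXiv:2602.23527 — 4 statements merged into one kernel-verified Lean document; each statement's English description precedes it below -/
import Mathlib

section
/- Let μ be a probability measure on (0, ∞) such that ∫ |log x| dμ(x) < ∞ and ∬ (log x − log y)/(x − y) dμ(x) dμ(y) < ∞ (integrand extended continuously by 1/x on the diagonal). Then ∫ log x dμ(x) + log( ∬ (log x − log y)/(x − y) dμ(x) dμ(y) ) ≥ 0. -/
open MeasureTheory Real
open scoped ENNReal

/-- The logarithmic divided difference `(log a - log b)/(a - b)`, extended
continuously by `1/a` on the diagonal. -/
noncomputable def logDiff (a b : ℝ) : ℝ :=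
  if a = b then 1 / a else (Real.log a - Real.log b) / (a - b)

/-!
Put `c = exp (∫ log dμ)`. Since `logDiff a b = ∫₀^∞ (a + s)⁻¹ (b + s)⁻¹ ds`, the kernel
`logDiff` is positive definite, so `2 ∫ logDiff x c dμ(x) ≤ ∬ logDiff dμ dμ + logDiff c c`,
and `logDiff c c = 1/c`. On the other hand `c · logDiff x c = φ (log x - log c)` with
`φ u = u / (exp u - 1)` convex and `φ u ≥ 1 - u/2`, so Jensen gives
`∫ logDiff x c dμ(x) ≥ 1/c`. Hence `∬ logDiff dμ dμ ≥ 1/c = exp (-∫ log dμ)`.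
-/

open Set Filter
open scoped Topology NNReal

lemma ENNReal.two_mul_le_add_sq (a b : ℝ≥0∞) : 2 * a * b ≤ a ^ 2 + b ^ 2 := by
  rcases eq_or_ne a ⊤ with rfl | ha
  · simp
  rcases eq_or_ne b ⊤ with rfl | hb
  · simp
  lift a to ℝ≥0 using ha
  lift b to ℝ≥0 using hb
  exact_mod_cast _root_.two_mul_le_add_sq a b

lemma MeasureTheory.ofReal_integral_le_lintegral_ofReal {α : Type*} [MeasurableSpace α]
    {μ : Measure α} (f : α → ℝ) :
    ENNReal.ofReal (∫ x, f x ∂μ) ≤ ∫⁻ x, ENNReal.ofReal (f x) ∂μ := by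
  by_cases hf : Integrable f μ
  · calc ENNReal.ofReal (∫ x, f x ∂μ) ≤ ENNReal.ofReal (∫ x, max (f x) 0 ∂μ) :=
          ENNReal.ofReal_le_ofReal (integral_mono hf hf.pos_part fun x => le_max_left _ _)
      _ = ∫⁻ x, ENNReal.ofReal (max (f x) 0) ∂μ :=
          ofReal_integral_eq_lintegral_ofReal hf.pos_part (ae_of_all _ fun x => le_max_right _ _)
      _ = ∫⁻ x, ENNReal.ofReal (f x) ∂μ := by simp
  · simp [integral_undef hf]

lemma logDiff_comm (a b : ℝ) : logDiff a b = logDiff b a := by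
  unfold logDiff
  rcases eq_or_ne a b with rfl | hne
  · rfl
  · rw [if_neg hne, if_neg hne.symm, ← neg_sub (Real.log b), ← neg_sub b, neg_div_neg_eq]

lemma sub_mul_logDiff (a b : ℝ) : (a - b) * logDiff a b = Real.log a - Real.log b := by
  unfold logDiff
  rcases eq_or_ne a b with rfl | hne
  · simp
  · rw [if_neg hne, mul_div_cancel₀ _ (sub_ne_zero.mpr hne)]

/-- The first term of the series `log (1 + z) - log (1 - z) = 2 ∑ z ^ (2k+1) / (2k+1)`
at `z = (b - a) / (b + a)`. -/
lemma two_mul_sub_div_add_le_log_sub_log {a b : ℝ} (ha : 0 < a) (hab : a ≤ b) :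
    2 * ((b - a) / (b + a)) ≤ Real.log b - Real.log a := by
  have hb : 0 < b := ha.trans_le hab
  set z := (b - a) / (b + a) with hz
  have hz0 : 0 ≤ z := div_nonneg (sub_nonneg.mpr hab) (by positivity)
  have hz1 : z < 1 := (div_lt_one (by positivity)).mpr (by linarith)
  have hratio : (1 + z) / (1 - z) = b / a := by
    rw [div_eq_div_iff (by linarith) ha.ne', hz]
    field_simp
    ring
  have h := le_hasSum (hasSum_log_sub_log_of_abs_lt_one (abs_lt.mpr ⟨by linarith, hz1⟩)) 0
    fun k _ => by positivity
  rw [← Real.log_div (by linarith) (by linarith), hratio, Real.log_div hb.ne' ha.ne'] at h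
  simpa using h

/-- The logarithmic mean is at most the arithmetic mean. -/
lemma two_div_add_le_logDiff {a b : ℝ} (ha : 0 < a) (hb : 0 < b) :
    2 / (a + b) ≤ logDiff a b := by
  wlog hab : a < b generalizing a b
  · rcases (not_lt.mp hab).eq_or_lt with rfl | hba
    · simp only [logDiff, if_true]
      rw [← two_mul, div_mul_cancel_left₀ two_ne_zero, one_div]
    · rw [add_comm, logDiff_comm]
      exact this hb ha hba
  have hdiff : logDiff a b = (Real.log b - Real.log a) / (b - a) := by
    rw [logDiff_comm, eq_div_iff (sub_ne_zero.mpr hab.ne'), mul_comm, sub_mul_logDiff]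
  rw [hdiff, le_div_iff₀ (sub_pos.mpr hab)]
  calc 2 / (a + b) * (b - a) = 2 * ((b - a) / (b + a)) := by rw [add_comm]; ring
    _ ≤ _ := two_mul_sub_div_add_le_log_sub_log ha hab.le

lemma logDiff_nonneg {a b : ℝ} (ha : 0 < a) (hb : 0 < b) : 0 ≤ logDiff a b :=
  (div_nonneg zero_le_two (add_pos ha hb).le).trans (two_div_add_le_logDiff ha hb)

lemma logDiff_le_inv_min {a b : ℝ} (ha : 0 < a) (hb : 0 < b) :
    logDiff a b ≤ (min a b)⁻¹ := by
  wlog hab : a ≤ b generalizing a b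
  · rw [logDiff_comm, min_comm]
    exact this hb ha (not_le.mp hab).le
  rw [min_eq_left hab]
  rcases hab.eq_or_lt with rfl | hlt
  · simp [logDiff]
  · have hlog : Real.log b - Real.log a ≤ (b - a) * a⁻¹ := by
      rw [← Real.log_div hb.ne' ha.ne']
      calc Real.log (b / a) ≤ b / a - 1 := Real.log_le_sub_one_of_pos (div_pos hb ha)
        _ = (b - a) * a⁻¹ := by field_simp
    rw [logDiff_comm]
    exact le_of_mul_le_mul_left (by rwa [sub_mul_logDiff]) (sub_pos.mpr hlt)

lemma two_sub_log_sub_log_le {a c : ℝ} (ha : 0 < a) (hc : 0 < c) :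
    2 - (Real.log a - Real.log c) ≤ 2 * c * logDiff a c := by
  have h := two_div_add_le_logDiff ha hc
  rw [div_le_iff₀ (add_pos ha hc)] at h
  rw [← sub_mul_logDiff]
  linarith

lemma hasDerivAt_logDiff_add {a b x : ℝ} (ha : 0 < a + x) (hb : 0 < b + x) :
    HasDerivAt (fun s => logDiff (a + s) (b + s)) (-((a + x)⁻¹ * (b + x)⁻¹)) x := by
  have hda := (hasDerivAt_id' x).const_add a
  rcases eq_or_ne a b with rfl | hne
  · have hfun : (fun s => logDiff (a + s) (a + s)) = fun s => (a + s)⁻¹ := by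
      ext s; simp [logDiff]
    rw [hfun]
    refine (hda.fun_inv ha.ne').congr_deriv ?_
    rw [neg_div, one_div, ← inv_pow, sq]
  · have hfun : (fun s => logDiff (a + s) (b + s)) =
        fun s => (Real.log (a + s) - Real.log (b + s)) / (a - b) := by
      ext s; simp [logDiff, hne]
    rw [hfun]
    have hdb := (hasDerivAt_id' x).const_add b
    refine (((hda.log ha.ne').fun_sub (hdb.log hb.ne')).div_const (a - b)).congr_deriv ?_
    have := sub_ne_zero.mpr hne
    field_simp
    ring

lemma tendsto_logDiff_add_atTop {a b : ℝ} (ha : 0 < a) (hb : 0 < b) :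
    Tendsto (fun s => logDiff (a + s) (b + s)) atTop (𝓝 0) := by
  have hmin : Tendsto (fun s => (min a b + s)⁻¹) atTop (𝓝 0) :=
    tendsto_inv_atTop_zero.comp (tendsto_atTop_add_const_left _ _ tendsto_id)
  refine tendsto_of_tendsto_of_tendsto_of_le_of_le' tendsto_const_nhds hmin ?_ ?_
  · filter_upwards [eventually_ge_atTop 0] with s hs
    exact logDiff_nonneg (by linarith) (by linarith)
  · filter_upwards [eventually_ge_atTop 0] with s hs
    rw [← min_add_add_right]
    exact logDiff_le_inv_min (by linarith) (by linarith)

/-- `s ↦ -logDiff (a + s) (b + s)` is an antiderivative of the integrand, vanishing at infinity. -/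
lemma lintegral_inv_add_mul_inv_add {a b : ℝ} (ha : 0 < a) (hb : 0 < b) :
    ∫⁻ s in Ioi 0, ENNReal.ofReal (a + s)⁻¹ * ENNReal.ofReal (b + s)⁻¹ =
      ENNReal.ofReal (logDiff a b) := by
  have hderiv : ∀ x ∈ Ici (0 : ℝ),
      HasDerivAt (fun s => -logDiff (a + s) (b + s)) ((a + x)⁻¹ * (b + x)⁻¹) x := by
    intro x (hx : 0 ≤ x)
    exact ((hasDerivAt_logDiff_add (by linarith) (by linarith)).fun_neg).congr_deriv (neg_neg _)
  have hpos : ∀ x ∈ Ioi (0 : ℝ), 0 ≤ (a + x)⁻¹ * (b + x)⁻¹ := fun x (hx : 0 < x) => by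
    positivity
  have hlim : Tendsto (fun s => -logDiff (a + s) (b + s)) atTop (𝓝 0) := by
    simpa using (tendsto_logDiff_add_atTop ha hb).neg
  have hint := integral_Ioi_of_hasDerivAt_of_nonneg' hderiv hpos hlim
  simp only [add_zero, sub_neg_eq_add, zero_add] at hint
  rw [← hint, ofReal_integral_eq_lintegral_ofReal
    (integrableOn_Ioi_deriv_of_nonneg' hderiv hpos hlim)
    (ae_restrict_of_forall_mem measurableSet_Ioi hpos)]
  refine setLIntegral_congr_fun measurableSet_Ioi fun s (hs : 0 < s) => ?_
  rw [ENNReal.ofReal_mul (by positivity)]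

lemma measurable_logDiff : Measurable fun p : ℝ × ℝ => logDiff p.1 p.2 :=
  Measurable.ite (measurableSet_eq_fun measurable_fst measurable_snd)
    (measurable_const.div measurable_fst)
    (((measurable_log.comp measurable_fst).sub (measurable_log.comp measurable_snd)).div
      (measurable_fst.sub measurable_snd))

/-- The Stieltjes transform of `μ`, evaluated at `-s`. -/
noncomputable def stieltjesTransform (μ : Measure ℝ) (s : ℝ) : ℝ≥0∞ :=
  ∫⁻ x, ENNReal.ofReal (x + s)⁻¹ ∂μ

noncomputable def logDiffPairing (μ ν : Measure ℝ) : ℝ≥0∞ :=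
  ∫⁻ p, ENNReal.ofReal (logDiff p.1 p.2) ∂(μ.prod ν)

lemma logDiffPairing_dirac {μ : Measure ℝ} [SFinite μ] (c : ℝ) :
    logDiffPairing μ (Measure.dirac c) = ∫⁻ x, ENNReal.ofReal (logDiff x c) ∂μ := by
  rw [logDiffPairing, Measure.prod_dirac,
    lintegral_map measurable_logDiff.ennreal_ofReal measurable_prodMk_right]

lemma logDiffPairing_dirac_dirac (c : ℝ) :
    logDiffPairing (Measure.dirac c) (Measure.dirac c) = ENNReal.ofReal c⁻¹ := by
  simp [logDiffPairing_dirac, logDiff]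

lemma ae_prod_pos {μ ν : Measure ℝ} (hμ : ∀ᵐ x ∂μ, 0 < x) (hν : ∀ᵐ y ∂ν, 0 < y) :
    ∀ᵐ p ∂(μ.prod ν), 0 < p.1 ∧ 0 < p.2 :=
  (Measure.quasiMeasurePreserving_fst.ae hμ).and (Measure.quasiMeasurePreserving_snd.ae hν)

lemma logDiffPairing_eq_ofReal_integral {μ ν : Measure ℝ} (hμ : ∀ᵐ x ∂μ, 0 < x)
    (hν : ∀ᵐ y ∂ν, 0 < y) (hint : Integrable (fun p : ℝ × ℝ => logDiff p.1 p.2) (μ.prod ν)) :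
    logDiffPairing μ ν = ENNReal.ofReal (∫ p : ℝ × ℝ, logDiff p.1 p.2 ∂(μ.prod ν)) :=
  (ofReal_integral_eq_lintegral_ofReal hint
    ((ae_prod_pos hμ hν).mono fun _ hp => logDiff_nonneg hp.1 hp.2)).symm

section Pairing

variable {μ ν : Measure ℝ} [SFinite μ] [SFinite ν]

@[fun_prop]
lemma measurable_stieltjesTransform : Measurable (stieltjesTransform μ) :=
  Measurable.lintegral_prod_left' (f := fun q : ℝ × ℝ => ENNReal.ofReal (q.1 + q.2)⁻¹)
    (by fun_prop)

lemma logDiffPairing_eq_lintegral_stieltjesTransform (hμ : ∀ᵐ x ∂μ, 0 < x)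
    (hν : ∀ᵐ y ∂ν, 0 < y) :
    logDiffPairing μ ν =
      ∫⁻ s in Ioi (0 : ℝ), stieltjesTransform μ s * stieltjesTransform ν s := by
  calc logDiffPairing μ ν
      = ∫⁻ p : ℝ × ℝ,
          (∫⁻ s in Ioi (0 : ℝ), ENNReal.ofReal (p.1 + s)⁻¹ * ENNReal.ofReal (p.2 + s)⁻¹)
          ∂(μ.prod ν) :=
        lintegral_congr_ae <| (ae_prod_pos hμ hν).mono fun p hp =>
          (lintegral_inv_add_mul_inv_add hp.1 hp.2).symm
    _ = ∫⁻ s in Ioi (0 : ℝ),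
          ∫⁻ p : ℝ × ℝ, ENNReal.ofReal (p.1 + s)⁻¹ * ENNReal.ofReal (p.2 + s)⁻¹ ∂(μ.prod ν) :=
        lintegral_lintegral_swap (by fun_prop)
    _ = _ := by
      refine lintegral_congr fun s => ?_
      exact lintegral_prod_mul (f := fun x => ENNReal.ofReal (x + s)⁻¹)
        (g := fun y => ENNReal.ofReal (y + s)⁻¹) (by fun_prop) (by fun_prop)

lemma two_mul_logDiffPairing_le (hμ : ∀ᵐ x ∂μ, 0 < x) (hν : ∀ᵐ y ∂ν, 0 < y) :
    2 * logDiffPairing μ ν ≤ logDiffPairing μ μ + logDiffPairing ν ν := by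
  rw [logDiffPairing_eq_lintegral_stieltjesTransform hμ hν,
    logDiffPairing_eq_lintegral_stieltjesTransform hμ hμ,
    logDiffPairing_eq_lintegral_stieltjesTransform hν hν,
    ← lintegral_add_left (by fun_prop), ← lintegral_const_mul _ (by fun_prop)]
  refine lintegral_mono fun s => ?_
  simpa only [sq, mul_assoc] using
    ENNReal.two_mul_le_add_sq (stieltjesTransform μ s) (stieltjesTransform ν s)

end Pairing

lemma ofReal_exp_neg_integral_log_le_logDiffPairing_dirac (μ : Measure ℝ)
    [IsProbabilityMeasure μ] (hμ : ∀ᵐ x ∂μ, 0 < x) (hlog : Integrable Real.log μ) :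
    ENNReal.ofReal (exp (-∫ x, Real.log x ∂μ)) ≤
      logDiffPairing μ (Measure.dirac (exp (∫ x, Real.log x ∂μ))) := by
  set c := exp (∫ x, Real.log x ∂μ) with hc
  have hc0 : 0 < c := exp_pos _
  have hmean : ∫ x, (2 - (Real.log x - Real.log c)) / (2 * c) ∂μ =
      exp (-∫ x, Real.log x ∂μ) := by
    rw [integral_div, integral_sub (g := fun x => Real.log x - Real.log c) (integrable_const _)
      (hlog.sub (integrable_const _)), integral_sub hlog (integrable_const _)]
    simp only [integral_const, probReal_univ, one_smul, hc, log_exp, sub_self, sub_zero, exp_neg]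
    exact div_mul_cancel_left₀ two_ne_zero _
  rw [logDiffPairing_dirac, ← hmean]
  refine (ofReal_integral_le_lintegral_ofReal _).trans (lintegral_mono_ae ?_)
  filter_upwards [hμ] with x hx
  refine ENNReal.ofReal_le_ofReal ?_
  rw [div_le_iff₀ (by positivity)]
  linarith [two_sub_log_sub_log_le hx hc0]

/-- Key inequality equivalent to the Boolean logarithmic Sobolev inequality:
for a probability measure `μ` on `(0,∞)` with integrable logarithm and finite
Fisher-type functional, `∫ log x dμ + log(∬ (log x − log y)/(x−y) dμ dμ) ≥ 0`. -/
theorem boolean_lsi_key_inequality (μ : Measure ℝ) [IsProbabilityMeasure μ]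
    (hsupp : μ (Set.Iic 0) = 0) (hlog : Integrable Real.log μ)
    (hF : Integrable (fun p : ℝ × ℝ => logDiff p.1 p.2) (μ.prod μ)) :
    0 ≤ (∫ x, Real.log x ∂μ) +
      Real.log (∫ p : ℝ × ℝ, logDiff p.1 p.2 ∂(μ.prod μ)) := by
  set m := ∫ x, Real.log x ∂μ
  set I := ∫ p : ℝ × ℝ, logDiff p.1 p.2 ∂(μ.prod μ)
  have hμ : ∀ᵐ x ∂μ, 0 < x :=
    ae_iff.mpr (measure_mono_null (fun x (hx : ¬ 0 < x) => not_lt.mp hx) hsupp)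
  have hc : ∀ᵐ y ∂(Measure.dirac (exp m)), 0 < y :=
    (ae_dirac_iff measurableSet_Ioi).mpr (exp_pos m)
  have key : ENNReal.ofReal (exp (-m)) ≤ ENNReal.ofReal I := by
    refine (ENNReal.add_le_add_iff_right (ENNReal.ofReal_ne_top (r := exp (-m)))).mp ?_
    calc ENNReal.ofReal (exp (-m)) + ENNReal.ofReal (exp (-m))
        ≤ 2 * logDiffPairing μ (Measure.dirac (exp m)) := by
          rw [← two_mul]
          gcongr
          exact ofReal_exp_neg_integral_log_le_logDiffPairing_dirac μ hμ hlog
      _ ≤ logDiffPairing μ μ + logDiffPairing (Measure.dirac (exp m)) (Measure.dirac (exp m)) :=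
          two_mul_logDiffPairing_le hμ hc
      _ = ENNReal.ofReal I + ENNReal.ofReal (exp (-m)) := by
          rw [logDiffPairing_eq_ofReal_integral hμ hμ hF, logDiffPairing_dirac_dirac, exp_neg]
  have hexp : exp (-m) ≤ I :=
    (ENNReal.ofReal_le_ofReal_iff'.mp key).resolve_right (exp_pos _).not_ge
  linarith [(le_log_iff_exp_le ((exp_pos _).trans_le hexp)).mpr hexp]
end

section
/- Let μ be a symmetric probability measure on ℝ. Then W₂(μ, b)² = ∫ (|x| − 1)² dμ(x), where b := (1/2)δ₋₁ + (1/2)δ₁ and W₂ denotes the 2-Wasserstein distance. -/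
open MeasureTheory Real
open scoped ENNReal

/-- The Rademacher (symmetric Bernoulli) distribution `b = (1/2)δ₋₁ + (1/2)δ₁`. -/
noncomputable def rademacher : Measure ℝ :=
  (1/2 : ℝ≥0∞) • Measure.dirac (-1) + (1/2 : ℝ≥0∞) • Measure.dirac 1

/-- The squared 2-Wasserstein distance between two measures on ℝ, as the infimum
of the quadratic transport cost over all couplings. -/
noncomputable def W2sq (μ ν : Measure ℝ) : ℝ≥0∞ :=
  ⨅ (pi : Measure (ℝ × ℝ)) (_ : pi.map Prod.fst = μ) (_ : pi.map Prod.snd = ν),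
    ∫⁻ p, ENNReal.ofReal ((p.1 - p.2) ^ 2) ∂pi

/-!
A coupling of `μ` with the Rademacher law is concentrated on `ℝ × {-1, 1}`, where
`(x - y)² ≥ (|x| - 1)²`; hence every transport cost is at least `∫ (|x| - 1)² dμ`.
Conversely, send each `x` to its sign. A possible atom of `μ` at `0` has to be split evenly
between `±1`, so average this map with its reflection `x ↦ (-x, -sign x)`: by symmetry of `μ`
the first marginal stays `μ`, the second marginal becomes `½ δ₋₁ + ½ δ₁` for every
probability measure `μ`, and the cost is exactly `∫ (|x| - 1)² dμ`.
-/

open Set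

noncomputable def signOne (x : ℝ) : ℝ := if x < 0 then -1 else 1

lemma measurable_signOne : Measurable signOne :=
  Measurable.ite measurableSet_Iio measurable_const measurable_const

lemma measurable_prod_signOne : Measurable fun x : ℝ => (x, signOne x) :=
  measurable_id.prodMk measurable_signOne

lemma measurable_neg_prod_neg_signOne : Measurable fun x : ℝ => (-x, -signOne x) :=
  measurable_neg.prodMk measurable_signOne.neg

lemma sq_sub_signOne (x : ℝ) : (x - signOne x) ^ 2 = (|x| - 1) ^ 2 := by
  unfold signOne
  split_ifs with hx
  · rw [abs_of_neg hx]; ring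
  · rw [abs_of_nonneg (not_lt.1 hx)]

lemma map_signOne (μ : Measure ℝ) :
    μ.map signOne = μ (Iio 0) • Measure.dirac (-1) + μ (Iio 0)ᶜ • Measure.dirac 1 := by
  conv_lhs => rw [← Measure.restrict_add_restrict_compl (μ := μ) (s := Iio 0) measurableSet_Iio]
  rw [Measure.map_add _ _ measurable_signOne,
    Measure.map_congr (μ := μ.restrict (Iio 0)) (g := fun _ => -1),
    Measure.map_congr (μ := μ.restrict (Iio 0)ᶜ) (g := fun _ => 1),
    Measure.map_const, Measure.map_const, Measure.restrict_apply_univ, Measure.restrict_apply_univ]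
  · filter_upwards [ae_restrict_mem measurableSet_Iio.compl] with x hx using if_neg hx
  · filter_upwards [ae_restrict_mem measurableSet_Iio] with x hx using if_pos hx

lemma half_map_signOne_add_half_map_neg_signOne (μ : Measure ℝ) [IsProbabilityMeasure μ] :
    (1/2 : ℝ≥0∞) • μ.map signOne + (1/2 : ℝ≥0∞) • μ.map (fun x => -signOne x) = rademacher := by
  have hneg : μ.map (fun x => -signOne x) = (μ.map signOne).map Neg.neg :=
    (Measure.map_map measurable_neg measurable_signOne).symm
  have htotal := prob_add_prob_compl (μ := μ) (measurableSet_Iio (a := (0 : ℝ)))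
  rw [hneg, map_signOne, Measure.map_add _ _ measurable_neg, Measure.map_smul, Measure.map_smul,
    Measure.map_dirac' measurable_neg, Measure.map_dirac' measurable_neg, neg_neg, rademacher]
  ext s hs
  simp only [Measure.add_apply, Measure.smul_apply, smul_eq_mul]
  calc _ = 1 / 2 * (μ (Iio 0) + μ (Iio 0)ᶜ) * Measure.dirac (-1 : ℝ) s
          + 1 / 2 * (μ (Iio 0) + μ (Iio 0)ᶜ) * Measure.dirac (1 : ℝ) s := by ring
    _ = _ := by rw [htotal, mul_one]

lemma sq_abs_sub_one_le_sq_sub {x y : ℝ} (hy : |y| = 1) : (|x| - 1) ^ 2 ≤ (x - y) ^ 2 :=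
  hy ▸ sq_le_sq.mpr (abs_abs_sub_abs_le_abs_sub x y)

lemma ae_abs_eq_one_rademacher : ∀ᵐ y ∂rademacher, |y| = 1 := by
  have h : MeasurableSet {y : ℝ | |y| = 1} := measurableSet_eq_fun measurable_abs measurable_const
  exact ae_add_measure_iff.2 ⟨Measure.ae_smul_measure ((ae_dirac_iff h).2 (by simp)) _,
    Measure.ae_smul_measure ((ae_dirac_iff h).2 (by simp)) _⟩

noncomputable def signCoupling (μ : Measure ℝ) : Measure (ℝ × ℝ) :=
  (1/2 : ℝ≥0∞) • μ.map (fun x => (x, signOne x)) +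
    (1/2 : ℝ≥0∞) • μ.map (fun x => (-x, -signOne x))

section signCoupling

variable (μ : Measure ℝ)

lemma map_fst_signCoupling (hsym : μ.map (fun x => -x) = μ) :
    (signCoupling μ).map Prod.fst = μ := by
  rw [signCoupling, Measure.map_add _ _ measurable_fst, Measure.map_smul, Measure.map_smul,
    Measure.map_map measurable_fst measurable_prod_signOne,
    Measure.map_map measurable_fst measurable_neg_prod_neg_signOne]
  change _ • μ.map id + _ • μ.map (fun x => -x) = μ
  rw [Measure.map_id, hsym, ← add_smul, ENNReal.add_halves, one_smul]

lemma map_snd_signCoupling [IsProbabilityMeasure μ] :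
    (signCoupling μ).map Prod.snd = rademacher := by
  rw [signCoupling, Measure.map_add _ _ measurable_snd, Measure.map_smul, Measure.map_smul,
    Measure.map_map measurable_snd measurable_prod_signOne,
    Measure.map_map measurable_snd measurable_neg_prod_neg_signOne]
  exact half_map_signOne_add_half_map_neg_signOne μ

lemma lintegral_signCoupling :
    ∫⁻ p, ENNReal.ofReal ((p.1 - p.2) ^ 2) ∂signCoupling μ
      = ∫⁻ x, ENNReal.ofReal ((|x| - 1) ^ 2) ∂μ := by
  have hcost : ∀ x : ℝ, (-x - -signOne x) ^ 2 = (|x| - 1) ^ 2 := fun x => by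
    rw [← sq_sub_signOne]; ring
  rw [signCoupling, lintegral_add_measure, lintegral_smul_measure, lintegral_smul_measure,
    lintegral_map (by fun_prop) measurable_prod_signOne,
    lintegral_map (by fun_prop) measurable_neg_prod_neg_signOne]
  simp only [sq_sub_signOne, hcost]
  rw [← add_smul, ENNReal.add_halves, one_smul]

end signCoupling

lemma W2sq_le_lintegral {μ ν : Measure ℝ} {γ : Measure (ℝ × ℝ)} (h₁ : γ.map Prod.fst = μ)
    (h₂ : γ.map Prod.snd = ν) : W2sq μ ν ≤ ∫⁻ p, ENNReal.ofReal ((p.1 - p.2) ^ 2) ∂γ :=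
  iInf_le_of_le γ (iInf_le_of_le h₁ (iInf_le_of_le h₂ le_rfl))

lemma le_W2sq {μ ν : Measure ℝ} {c : ℝ≥0∞}
    (h : ∀ γ : Measure (ℝ × ℝ), γ.map Prod.fst = μ → γ.map Prod.snd = ν →
      c ≤ ∫⁻ p, ENNReal.ofReal ((p.1 - p.2) ^ 2) ∂γ) : c ≤ W2sq μ ν :=
  le_iInf fun γ => le_iInf fun h₁ => le_iInf fun h₂ => h γ h₁ h₂

lemma lintegral_sq_abs_sub_one_le_of_map_snd_eq_rademacher {γ : Measure (ℝ × ℝ)}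
    (h : γ.map Prod.snd = rademacher) :
    ∫⁻ x, ENNReal.ofReal ((|x| - 1) ^ 2) ∂γ.map Prod.fst
      ≤ ∫⁻ p, ENNReal.ofReal ((p.1 - p.2) ^ 2) ∂γ := by
  have hsnd : ∀ᵐ p ∂γ, |p.2| = 1 :=
    ae_of_ae_map measurable_snd.aemeasurable (h ▸ ae_abs_eq_one_rademacher)
  rw [lintegral_map (by fun_prop) measurable_fst]
  exact lintegral_mono_ae (hsnd.mono fun p hp =>
    ENNReal.ofReal_le_ofReal (sq_abs_sub_one_le_sq_sub hp))

/-- For a symmetric probability measure `μ` on ℝ, the quadratic Wasserstein distance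
to the Rademacher law is `W₂(μ,b)² = ∫ (|x| − 1)² dμ`. -/
theorem W2sq_to_rademacher_eq (μ : Measure ℝ) [IsProbabilityMeasure μ]
    (hsym : μ.map (fun x => -x) = μ) :
    W2sq μ rademacher = ∫⁻ x, ENNReal.ofReal ((|x| - 1) ^ 2) ∂μ := by
  refine le_antisymm ?_ (le_W2sq fun γ h₁ h₂ => ?_)
  · rw [← lintegral_signCoupling μ]
    exact W2sq_le_lintegral (map_fst_signCoupling μ hsym) (map_snd_signCoupling μ)
  · exact h₁ ▸ lintegral_sq_abs_sub_one_le_of_map_snd_eq_rademacher h₂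
end

section
/- For all u > 0 and δ ∈ (0, 1], one has u − log u − 1 ≤ δ·(u + 1/u − 2) + (−log δ + δ − 1)·(u − 1)². -/
/-!
Since `u + 1/u - 2 = (u - 1)² / u`, the right-hand side equals `(u - 1)² (δ (u + 1)/u - 1 - log δ)`,
and `log x ≤ x - 1` at `x = δ (u + 1)/u` bounds the bracket below by `log ((u + 1)/u)`; this is
the bound's value at its minimizer `δ = u/(u + 1)`. It remains to show
`H(u) = log u - u + 1 + (u - 1)² log ((u + 1)/u) ≥ 0`. Its derivative is
`2 (u - 1) (log ((u + 1)/u) - 1/(u + 1))`, whose second factor is nonnegative, so `H` has its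
minimum `H(1) = 0` at `u = 1`.
-/

open Real Set

lemma inv_add_one_le_log_add_one_sub_log {x : ℝ} (hx : 0 < x) :
    (x + 1)⁻¹ ≤ log (x + 1) - log x := by
  have h := one_sub_inv_le_log_of_pos (show 0 < (x + 1) / x by positivity)
  rwa [log_div (by positivity) hx.ne', inv_div, one_sub_div (by positivity), add_sub_cancel_left,
    one_div] at h

lemma log_add_one_sub_log_le {u δ : ℝ} (hu : 0 < u) (hδ : 0 < δ) :
    log (u + 1) - log u ≤ δ * (u + 1) / u - 1 - log δ := by
  have h := log_le_sub_one_of_pos (show 0 < δ * (u + 1) / u by positivity)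
  rw [log_div (by positivity) hu.ne', log_mul hδ.ne' (by positivity)] at h
  linarith

noncomputable def hsiGap (u : ℝ) : ℝ :=
  log u - u + 1 + (u - 1) ^ 2 * (log (u + 1) - log u)

lemma hasDerivAt_hsiGap {x : ℝ} (hx : 0 < x) :
    HasDerivAt hsiGap (2 * (x - 1) * (log (x + 1) - log x - (x + 1)⁻¹)) x := by
  have hlog : HasDerivAt (fun y ↦ log y) x⁻¹ x := hasDerivAt_log hx.ne'
  have hlog₁ : HasDerivAt (fun y ↦ log (y + 1)) (x + 1)⁻¹ x := by
    simpa using ((hasDerivAt_id x).add_const 1).log (by positivity)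
  have hsq : HasDerivAt (fun y ↦ (y - 1) ^ 2) (2 * (x - 1)) x := by
    simpa [Pi.pow_def] using ((hasDerivAt_id x).sub_const 1).pow 2
  have h : HasDerivAt (fun y ↦ log y - y + 1 + (y - 1) ^ 2 * (log (y + 1) - log y))
      (x⁻¹ - 1 + (2 * (x - 1) * (log (x + 1) - log x) + (x - 1) ^ 2 * ((x + 1)⁻¹ - x⁻¹))) x :=
    ((hlog.sub (hasDerivAt_id' x)).add_const 1).add (hsq.mul (hlog₁.sub hlog))
  refine h.congr_deriv ?_
  field_simp
  ring

lemma hsiGap_nonneg {u : ℝ} (hu : 0 < u) : 0 ≤ hsiGap u := by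
  have hderiv {x : ℝ} (hx : 0 < x) :
      deriv hsiGap x = 2 * (x - 1) * (log (x + 1) - log x - (x + 1)⁻¹) :=
    (hasDerivAt_hsiGap hx).deriv
  have hdiff : DifferentiableOn ℝ hsiGap (Ioi 0) := fun x hx ↦
    (hasDerivAt_hsiGap hx).differentiableAt.differentiableWithinAt
  have hmin : IsMinOn hsiGap (Ioi 0) 1 := by
    refine isMinOn_Ioi_of_deriv (hasDerivAt_hsiGap one_pos).continuousAt
      (hdiff.mono Ioo_subset_Ioi_self) (hdiff.mono (Ioi_subset_Ioi zero_le_one)) ?_ ?_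
    · rintro x ⟨hx₀, hx₁⟩
      rw [hderiv hx₀]
      exact mul_nonpos_of_nonpos_of_nonneg (by linarith)
        (sub_nonneg.2 (inv_add_one_le_log_add_one_sub_log hx₀))
    · intro x (hx₁ : 1 < x)
      have hx₀ : 0 < x := by linarith
      rw [hderiv hx₀]
      exact mul_nonneg (by linarith) (sub_nonneg.2 (inv_add_one_le_log_add_one_sub_log hx₀))
  simpa [hsiGap] using hmin (mem_Ioi.2 hu)

theorem hsi_pointwise_inequality_general (u δ : ℝ) (hu : 0 < u) (hδ0 : 0 < δ) :
    u - Real.log u - 1 ≤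
      δ * (u + 1/u - 2) + (-Real.log δ + δ - 1) * (u - 1) ^ 2 := by
  calc u - log u - 1
      ≤ (u - 1) ^ 2 * (log (u + 1) - log u) := by linarith [hsiGap_nonneg hu, hsiGap.eq_1 u]
    _ ≤ (u - 1) ^ 2 * (δ * (u + 1) / u - 1 - log δ) :=
      mul_le_mul_of_nonneg_left (log_add_one_sub_log_le hu hδ0) (sq_nonneg _)
    _ = δ * (u + 1 / u - 2) + (-log δ + δ - 1) * (u - 1) ^ 2 := by
      field_simp
      ring

theorem hsi_pointwise_inequality (u δ : ℝ) (hu : 0 < u) (hδ0 : 0 < δ) (hδ1 : δ ≤ 1) :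
    u - Real.log u - 1 ≤
      δ * (u + 1/u - 2) + (-Real.log δ + δ - 1) * (u - 1) ^ 2 :=
  hsi_pointwise_inequality_general u δ hu hδ0
end

section
/- For all u > 0, H(u) := log u − u + 1 + (u − 1)²·log((u+1)/u) ≥ 0, with equality if and only if u = 1. -/
/-!
With `H u = log u - u + 1 + (u - 1)² log ((u + 1) / u)` one has `H 1 = 0` and
`H' u = 2 (u - 1) (log ((u + 1) / u) - 1 / (u + 1))`. The second factor is positive by
`log x < x - 1` at `x = u / (u + 1)`, so `H` strictly decreases on `(0, 1]` and strictly
increases on `[1, ∞)`; hence `H u > 0` for every `u ≠ 1`.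
-/

open Real Set

noncomputable def hsiFun (u : ℝ) : ℝ :=
  log u - u + 1 + (u - 1) ^ 2 * log ((u + 1) / u)

noncomputable def hsiDeriv (u : ℝ) : ℝ :=
  2 * (u - 1) * (log ((u + 1) / u) - 1 / (u + 1))

lemma one_div_add_one_lt_log_add_one_div {u : ℝ} (hu : 0 < u) :
    1 / (u + 1) < log ((u + 1) / u) := by
  have hlt : log (u / (u + 1)) < u / (u + 1) - 1 :=
    log_lt_sub_one_of_pos (by positivity) (by rw [Ne, div_eq_one_iff_eq (by positivity)]; linarith)
  have hsub : u / (u + 1) - 1 = -(1 / (u + 1)) := by field_simp; ring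
  rw [← inv_div u (u + 1), log_inv]
  linarith

lemma hasDerivAt_hsiFun {u : ℝ} (hu : 0 < u) :
    HasDerivAt hsiFun (hsiDeriv u) u := by
  have hquot : HasDerivAt (fun x => (x + 1) / x) ((1 * u - (u + 1) * 1) / u ^ 2) u :=
    ((hasDerivAt_id u).add_const 1).div (hasDerivAt_id u) hu.ne'
  have h := (((hasDerivAt_log hu.ne').sub (hasDerivAt_id u)).add_const 1).add
    ((((hasDerivAt_id u).sub_const 1).pow 2).mul (hquot.log (by positivity)))
  refine h.congr_deriv ?_
  simp only [hsiDeriv, id, Pi.pow_apply]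
  field_simp
  ring

lemma hsiFun_one : hsiFun 1 = 0 := by simp [hsiFun]

lemma strictAntiOn_hsiFun : StrictAntiOn hsiFun (Ioc 0 1) := by
  refine strictAntiOn_of_hasDerivWithinAt_neg (f' := hsiDeriv) (convex_Ioc 0 1)
    (fun x hx => (hasDerivAt_hsiFun hx.1).continuousAt.continuousWithinAt)
    (fun x hx => ?_) (fun x hx => ?_)
  all_goals rw [interior_Ioc] at hx
  · exact (hasDerivAt_hsiFun hx.1).hasDerivWithinAt
  · exact mul_neg_of_neg_of_pos (by linarith [hx.2])
      (sub_pos.2 (one_div_add_one_lt_log_add_one_div hx.1))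

lemma strictMonoOn_hsiFun : StrictMonoOn hsiFun (Ici 1) := by
  refine strictMonoOn_of_hasDerivWithinAt_pos (f' := hsiDeriv) (convex_Ici 1)
    (fun x hx => (hasDerivAt_hsiFun (one_pos.trans_le hx)).continuousAt.continuousWithinAt)
    (fun x hx => ?_) (fun x hx => ?_)
  all_goals rw [interior_Ici] at hx
  · exact (hasDerivAt_hsiFun (one_pos.trans hx)).hasDerivWithinAt
  · exact mul_pos (by linarith [mem_Ioi.1 hx])
      (sub_pos.2 (one_div_add_one_lt_log_add_one_div (one_pos.trans hx)))

lemma hsiFun_pos {u : ℝ} (hu : 0 < u) (hu1 : u ≠ 1) : 0 < hsiFun u := by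
  rw [← hsiFun_one]
  rcases hu1.lt_or_gt with hlt | hgt
  · exact strictAntiOn_hsiFun ⟨hu, hlt.le⟩ ⟨one_pos, le_rfl⟩ hlt
  · exact strictMonoOn_hsiFun self_mem_Ici hgt.le hgt

theorem hsi_scalar_inequality (u : ℝ) (hu : 0 < u) :
    0 ≤ Real.log u - u + 1 + (u - 1) ^ 2 * Real.log ((u + 1) / u) ∧
    (Real.log u - u + 1 + (u - 1) ^ 2 * Real.log ((u + 1) / u) = 0 ↔ u = 1) := by
  change 0 ≤ hsiFun u ∧ (hsiFun u = 0 ↔ u = 1)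
  by_cases hu1 : u = 1
  · subst hu1
    simp [hsiFun_one]
  · exact ⟨(hsiFun_pos hu hu1).le, fun h => absurd h (hsiFun_pos hu hu1).ne', fun h => absurd h hu1⟩
end
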